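/- arXiv:2007.04382 — 2 statements merged into one kernel-verified Lean document; each statement's English description precedes it below -/
import Mathlib

section
/- Let $F$ be a linear isometry of a norm $\|\cdot\|_X$ on $\mathbb{R}^n$ all of whose eigenvalues are real, and $F\neq\pm\operatorname{Id}$. Then $\|F+\operatorname{Id}\|_X=\|F-\operatorname{Id}\|_X=2$ (operator norms with respect to $\|\cdot\|_X$). -/
open scoped Real

def IsQuasinorm {E : Type*} [AddCommGroup E] [Module ℝ E] (q : E → ℝ) : Prop :=
  (∀ x, 0 ≤ q x) ∧ (∀ x, q x = 0 ↔ x = 0) ∧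
  (∀ (c : ℝ) (x : E), q (c • x) = |c| * q x) ∧
  ∃ k : ℝ, 0 < k ∧ ∀ x y, q (x + y) ≤ k * (q x + q y)

def IsNormFn {E : Type*} [AddCommGroup E] [Module ℝ E] (q : E → ℝ) : Prop :=
  (∀ x, 0 ≤ q x) ∧ (∀ x, q x = 0 ↔ x = 0) ∧
  (∀ (c : ℝ) (x : E), q (c • x) = |c| * q x) ∧
  ∀ x y, q (x + y) ≤ q x + q y

def distSet {E : Type*} [AddCommGroup E] [Module ℝ E] (q r : E → ℝ) : Set ℝ :=
  {μ : ℝ | 1 ≤ μ ∧ ∃ l : ℝ, 0 < l ∧ ∀ x, q x ≤ l * r x ∧ l * r x ≤ μ * q x}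

noncomputable def multDist {E : Type*} [AddCommGroup E] [Module ℝ E] (q r : E → ℝ) : ℝ :=
  sInf (distSet q r)

/-!
Every real eigenvalue of a `q`-isometry has modulus one, so the hypothesis on the spectrum forces
all complex eigenvalues of `A` to be `±1`, and `A ^ 2 - 1` is nilpotent. A unipotent isometry is the
identity, since a nontrivial Jordan block would make some orbit grow linearly; hence `A * A = 1`.
As `A ≠ ±1`, the nonzero ranges of `A + 1` and `A - 1` consist of eigenvectors for `1` and `-1`
respectively. The triangle inequality bounds `‖A ± 1‖` by `2`, and these eigenvectors attain it.
-/

namespace IsNormFn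

variable {E : Type*} [AddCommGroup E] [Module ℝ E] {q : E → ℝ}

lemma nonneg (hq : IsNormFn q) (x : E) : 0 ≤ q x := hq.1 x

lemma eq_zero_iff (hq : IsNormFn q) {x : E} : q x = 0 ↔ x = 0 := hq.2.1 x

lemma smul (hq : IsNormFn q) (c : ℝ) (x : E) : q (c • x) = |c| * q x := hq.2.2.1 c x

lemma add_le (hq : IsNormFn q) (x y : E) : q (x + y) ≤ q x + q y := hq.2.2.2 x y

lemma neg (hq : IsNormFn q) (x : E) : q (-x) = q x := by
  simpa using hq.smul (-1) x

lemma pos (hq : IsNormFn q) {x : E} (hx : x ≠ 0) : 0 < q x :=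
  (hq.nonneg x).lt_of_ne' (hq.eq_zero_iff.not.mpr hx)

lemma sub_le (hq : IsNormFn q) (x y : E) : q (x - y) ≤ q x + q y := by
  simpa only [sub_eq_add_neg, hq.neg] using hq.add_le x (-y)

lemma sSup_image_eq {g : E →ₗ[ℝ] E} {c : ℝ} (hq : IsNormFn q) (hg : ∀ x, q (g x) ≤ c * q x)
    {u : E} (hu : u ≠ 0) (hgu : q (g u) = c * q u) :
    sSup ((fun x => q (g x)) '' {x | q x ≤ 1}) = c := by
  have hqu := hq.pos hu
  have hc : 0 ≤ c := nonneg_of_mul_nonneg_left (hgu ▸ hq.nonneg _) hqu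
  have hbound : ∀ y ∈ (fun x => q (g x)) '' {x | q x ≤ 1}, y ≤ c := by
    rintro _ ⟨x, hx, rfl⟩
    exact (hg x).trans (mul_le_of_le_one_right hc hx)
  have hattained : c ∈ (fun x => q (g x)) '' {x | q x ≤ 1} := by
    refine ⟨(q u)⁻¹ • u, ?_, ?_⟩
    · simp only [Set.mem_ofPred_eq, hq.smul, abs_inv, abs_of_pos hqu, inv_mul_cancel₀ hqu.ne',
        le_refl]
    · simp only [map_smul, hq.smul, abs_inv, abs_of_pos hqu, hgu]
      field_simp
  exact le_antisymm (csSup_le ⟨c, hattained⟩ hbound) (le_csSup ⟨c, hbound⟩ hattained)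

end IsNormFn

section Isometry

variable {E : Type*} [AddCommGroup E] [Module ℝ E] {q : E → ℝ} {f : Module.End ℝ E}

lemma isometry_pow (hf : ∀ x, q (f x) = q x) (k : ℕ) (x : E) : q ((f ^ k) x) = q x := by
  induction k with
  | zero => rfl
  | succ k ih => rw [pow_succ', Module.End.mul_apply, hf, ih]

namespace IsNormFn

lemma abs_eq_one_of_hasEigenvalue (hq : IsNormFn q) (hf : ∀ x, q (f x) = q x) {r : ℝ}
    (hr : f.HasEigenvalue r) : |r| = 1 := by
  obtain ⟨v, hv⟩ := hr.exists_hasEigenvector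
  have : |r| * q v = 1 * q v := by rw [one_mul, ← hq.smul, ← hv.apply_eq_smul, hf]
  exact mul_right_cancel₀ (hq.pos hv.2).ne' this

-- The orbit `f ^ k v = v + k • w` stays on a sphere of `q` while `q (k • w)` grows linearly.
lemma eq_zero_of_apply_eq_add (hq : IsNormFn q) (hf : ∀ x, q (f x) = q x) {v w : E}
    (hv : f v = v + w) (hw : f w = w) : w = 0 := by
  have horbit : ∀ k : ℕ, (f ^ k) v = v + (k : ℝ) • w := by
    intro k
    induction k with
    | zero => simp
    | succ k ih =>
      rw [pow_succ', Module.End.mul_apply, ih, map_add, map_smul, hv, hw]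
      push_cast
      module
  have hlinear : ∀ k : ℕ, (k : ℝ) * q w ≤ 2 * q v := by
    intro k
    have := hq.sub_le ((f ^ k) v) v
    rw [horbit, add_sub_cancel_left, hq.smul, Nat.abs_cast, ← horbit, isometry_pow hf] at this
    linarith
  by_contra hw0
  obtain ⟨k, hk⟩ := exists_nat_gt (2 * q v / q w)
  exact (hlinear k).not_gt ((div_lt_iff₀ (hq.pos hw0)).mp hk)

lemma sub_one_pow_eq_zero_of_pow_succ_eq_zero (hq : IsNormFn q) (hf : ∀ x, q (f x) = q x)
    {k : ℕ} (hk : (f - 1) ^ (k + 2) = 0) : (f - 1) ^ (k + 1) = 0 := by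
  ext x
  apply hq.eq_zero_of_apply_eq_add hf (v := ((f - 1) ^ k) x)
  · rw [pow_succ', Module.End.mul_apply, LinearMap.sub_apply, Module.End.one_apply]
    abel
  · have := congrArg (· x) hk
    simp only [pow_succ' _ (k + 1), Module.End.mul_apply, LinearMap.sub_apply,
      Module.End.one_apply, LinearMap.zero_apply, sub_eq_zero] at this
    exact this

lemma eq_one_of_isNilpotent_sub_one (hq : IsNormFn q) (hf : ∀ x, q (f x) = q x)
    (h : IsNilpotent (f - 1)) : f = 1 := by
  obtain ⟨m, hm⟩ := h
  have key : ∀ k, (f - 1) ^ (k + 1) = 0 → f = 1 := by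
    intro k
    induction k with
    | zero => intro hk; rwa [zero_add, pow_one, sub_eq_zero] at hk
    | succ k ih => exact fun hk => ih (hq.sub_one_pow_eq_zero_of_pow_succ_eq_zero hf hk)
  exact key m (by rw [pow_succ, hm, zero_mul])

lemma sSup_image_add_one_eq_two (hq : IsNormFn q) (hf : ∀ x, q (f x) = q x) {u : E}
    (hu : u ≠ 0) (hfu : f u = u) : sSup ((fun x => q ((f + 1) x)) '' {x | q x ≤ 1}) = 2 := by
  refine hq.sSup_image_eq (fun x => ?_) hu ?_
  · calc q ((f + 1) x) ≤ q (f x) + q x := hq.add_le _ _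
      _ = 2 * q x := by rw [hf]; ring
  · rw [LinearMap.add_apply, Module.End.one_apply, hfu, ← two_smul ℝ, hq.smul, abs_two]

lemma sSup_image_sub_one_eq_two (hq : IsNormFn q) (hf : ∀ x, q (f x) = q x) {u : E}
    (hu : u ≠ 0) (hfu : f u = -u) : sSup ((fun x => q ((f - 1) x)) '' {x | q x ≤ 1}) = 2 := by
  refine hq.sSup_image_eq (fun x => ?_) hu ?_
  · calc q ((f - 1) x) ≤ q (f x) + q x := hq.sub_le _ _
      _ = 2 * q x := by rw [hf]; ring
  · rw [LinearMap.sub_apply, Module.End.one_apply, hfu, ← neg_add', ← two_smul ℝ, hq.neg,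
      hq.smul, abs_two]

end IsNormFn

end Isometry

namespace Module.End

variable {R M : Type*} [Ring R] [AddCommGroup M] [Module R M] {f : Module.End R M}

lemma exists_apply_eq_neg_of_mul_self_eq_one (hf : f * f = 1) (hf1 : f ≠ 1) :
    ∃ v, v ≠ 0 ∧ f v = -v := by
  obtain ⟨x, hx⟩ := DFunLike.ne_iff.mp (sub_ne_zero.mpr hf1)
  refine ⟨(f - 1) x, hx, ?_⟩
  have hfx : f (f x) = x := by rw [← Module.End.mul_apply, hf, Module.End.one_apply]
  simp only [LinearMap.sub_apply, Module.End.one_apply, map_sub, hfx, neg_sub]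

lemma exists_apply_eq_self_of_mul_self_eq_one (hf : f * f = 1) (hf1 : f ≠ -1) :
    ∃ v, v ≠ 0 ∧ f v = v := by
  obtain ⟨v, hv, hfv⟩ := exists_apply_eq_neg_of_mul_self_eq_one (f := -f) (by rwa [neg_mul_neg])
    (by rwa [ne_eq, neg_eq_iff_eq_neg])
  exact ⟨v, hv, by simpa using hfv⟩

end Module.End

namespace Matrix

variable {ι : Type*} [Fintype ι] [DecidableEq ι]

open Polynomial in
lemma isNilpotent_of_spectrum_subset_zero {K : Type*} [Field K] [IsAlgClosed K]
    {M : Matrix ι ι K} (h : spectrum K M ⊆ {0}) : IsNilpotent M := by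
  have hroots : M.charpoly.roots = Multiset.replicate (Multiset.card M.charpoly.roots) 0 :=
    Multiset.eq_replicate_of_mem fun r hr =>
      h (mem_spectrum_iff_isRoot_charpoly.mpr (isRoot_of_mem_roots hr))
  obtain ⟨k, hchar⟩ : ∃ k, M.charpoly = X ^ k := by
    refine ⟨Multiset.card M.charpoly.roots, ?_⟩
    conv_lhs => rw [(IsAlgClosed.splits M.charpoly).eq_prod_roots_of_monic M.charpoly_monic,
      hroots]
    simp
  refine ⟨k, ?_⟩
  simpa [hchar] using M.aeval_self_charpoly

open Polynomial in
lemma isNilpotent_sq_sub_one_of_spectrum_subset {K : Type*} [Field K] [IsAlgClosed K]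
    {M : Matrix ι ι K} (h : spectrum K M ⊆ {1, -1}) : IsNilpotent (M ^ 2 - 1) := by
  apply isNilpotent_of_spectrum_subset_zero
  have hdeg : 0 < (X ^ 2 - 1 : K[X]).degree := by
    rw [← C_1, degree_X_pow_sub_C two_pos]; norm_num
  have := spectrum.map_polynomial_aeval_of_degree_pos M _ hdeg
  simp only [map_sub, map_pow, aeval_X, map_one] at this
  rw [this]
  rintro _ ⟨μ, hμ, rfl⟩
  rcases h hμ with rfl | rfl <;> simp

lemma algebraMap_mem_spectrum_map_iff {K L : Type*} [Field K] [Field L] [Algebra K L]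
    (A : Matrix ι ι K) (r : K) :
    algebraMap K L r ∈ spectrum L (A.map (algebraMap K L)) ↔ r ∈ spectrum K A := by
  rw [mem_spectrum_iff_isRoot_charpoly, mem_spectrum_iff_isRoot_charpoly, charpoly_map,
    Polynomial.isRoot_map_iff (algebraMap K L).injective]

lemma spectrum_map_complex_subset_of_isometry {q : (ι → ℝ) → ℝ} (hq : IsNormFn q)
    {A : Matrix ι ι ℝ} (hiso : ∀ x, q (A *ᵥ x) = q x)
    (hreal : ∀ μ ∈ spectrum ℂ (A.map (algebraMap ℝ ℂ)), μ.im = 0) :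
    spectrum ℂ (A.map (algebraMap ℝ ℂ)) ⊆ {1, -1} := by
  intro μ hμ
  have hμre : μ = algebraMap ℝ ℂ μ.re := Complex.ext rfl (by simp [hreal μ hμ])
  rw [hμre, algebraMap_mem_spectrum_map_iff, ← spectrum_toLin',
    ← Module.End.hasEigenvalue_iff_mem_spectrum] at hμ
  rw [hμre]
  rcases (abs_eq zero_le_one).mp (hq.abs_eq_one_of_hasEigenvalue hiso hμ) with h | h <;> simp [h]

lemma mul_self_eq_one_of_isometry {q : (ι → ℝ) → ℝ} (hq : IsNormFn q)
    {A : Matrix ι ι ℝ} (hiso : ∀ x, q (A *ᵥ x) = q x)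
    (hreal : ∀ μ ∈ spectrum ℂ (A.map (algebraMap ℝ ℂ)), μ.im = 0) :
    A * A = 1 := by
  have hnil : IsNilpotent (A ^ 2 - 1) := by
    rw [← IsNilpotent.map_iff (f := (algebraMap ℝ ℂ).mapMatrix (m := ι))
      (map_injective (algebraMap ℝ ℂ).injective)]
    simpa only [map_sub, map_pow, map_one, RingHom.mapMatrix_apply] using
      isNilpotent_sq_sub_one_of_spectrum_subset
        (spectrum_map_complex_subset_of_isometry hq hiso hreal)
  have hnil' := hnil.map (toLinAlgEquiv' (R := ℝ) (n := ι))
  rw [map_sub, map_pow, map_one] at hnil'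
  have hsq := hq.eq_one_of_isNilpotent_sub_one (isometry_pow (f := toLinAlgEquiv' A) hiso 2) hnil'
  apply toLinAlgEquiv'.injective
  rw [map_mul, map_one, ← sq, hsq]

end Matrix

open Matrix in
/-- For an isometry ≠ ±Id with all eigenvalues real, ‖F+Id‖ = ‖F-Id‖ = 2. -/
theorem stmt15 {n : ℕ} (A : Matrix (Fin n) (Fin n) ℝ) (q : (Fin n → ℝ) → ℝ)
    (hq : IsNormFn q) (hiso : ∀ x, q (A.mulVec x) = q x)
    (hA : A ≠ 1 ∧ A ≠ -1)
    (hreal : ∀ μ ∈ spectrum ℂ (A.map (algebraMap ℝ ℂ)), μ.im = 0) :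
    sSup ((fun x => q ((A + 1).mulVec x)) '' {x | q x ≤ 1}) = 2 ∧
    sSup ((fun x => q ((A - 1).mulVec x)) '' {x | q x ≤ 1}) = 2 := by
  set f := toLinAlgEquiv' (R := ℝ) A
  have hsq : f * f = 1 := by rw [← map_mul, mul_self_eq_one_of_isometry hq hiso hreal, map_one]
  have hf1 : f ≠ 1 := by
    rw [ne_eq, ← map_one toLinAlgEquiv', EquivLike.apply_eq_iff_eq]; exact hA.1
  have hfneg1 : f ≠ -1 := by
    rw [ne_eq, ← map_one toLinAlgEquiv', ← map_neg, EquivLike.apply_eq_iff_eq]; exact hA.2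
  obtain ⟨u, hu, hfu⟩ := Module.End.exists_apply_eq_self_of_mul_self_eq_one hsq hfneg1
  obtain ⟨w, hw, hfw⟩ := Module.End.exists_apply_eq_neg_of_mul_self_eq_one hsq hf1
  constructor
  · simpa only [f, ← map_one toLinAlgEquiv', ← map_add, toLinAlgEquiv'_apply]
      using hq.sSup_image_add_one_eq_two (f := f) hiso hu hfu
  · simpa only [f, ← map_one toLinAlgEquiv', ← map_sub, toLinAlgEquiv'_apply]
      using hq.sSup_image_sub_one_eq_two (f := f) hiso hw hfw
end

section
/- The map $(T,\|\cdot\|)\mapsto T^*\|\cdot\|$, where $(T^*\|\cdot\|)(x)=\|Tx\|$, is continuous from $\operatorname{GL}(n,\mathbb{R})\times\mathcal{N}$ to $\mathcal{N}$, where $\mathcal{N}$ is the space of equivalence classes of norms on $\mathbb{R}^n$ modulo positive scaling with the multiplicative distance; however, this fails for continuous quasinorms: there exists a quasinorm $\|\cdot\|$ on $\mathbb{R}^2$ and rotations $T_k$ (angle $\pi/k$) converging to the identity such that $d(T_k^*\|\cdot\|,T_l^*\|\cdot\|)=4$ for all $k\neq l$. -/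
/-!
A norm `q` on `ℝⁿ` is comparable to the sup norm, so for `S` entrywise `δ`-close to an invertible
`T` one gets `q ((S - T) x) ≤ D δ q (T x)`: the pullbacks of `q` by `S` and by `T` are at
multiplicative distance at most `(1 + Dδ) / (1 - Dδ)`. As the distance is submultiplicative and
unchanged by pulling both arguments back along the same map,
`d(S*r, T*q) ≤ d(r, q) · d(S*q, T*q)`, which tends to `1`.

For the quasinorm that halves the Euclidean norm on the punctured `x`-axis, the two pullbacks by
rotations through `a` and `b` (with `sin (b - a) ≠ 0`) lie within a factor `2` of the Euclidean
norm, hence at distance at most `4`; the unit vector that the first rotation sends onto the axis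
is sent off it by the second, and vice versa, and these two vectors force distance exactly `4`.
-/

open scoped Real

section distSet

variable {E : Type*} [AddCommGroup E] [Module ℝ E] {q r s : E → ℝ} {μ ν : ℝ}

lemma multDist_le_of_mem (h : μ ∈ distSet q r) : multDist q r ≤ μ :=
  csInf_le ⟨1, fun _ hν => hν.1⟩ h

lemma exists_mem_distSet_lt_of_multDist_lt (hne : (distSet q r).Nonempty)
    (h : multDist q r < ν) : ∃ μ ∈ distSet q r, μ < ν :=
  (csInf_lt_iff ⟨1, fun _ hμ => hμ.1⟩ hne).mp h

lemma mem_distSet_comp {F : Type*} [AddCommGroup F] [Module ℝ F] (f : F → E)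
    (h : μ ∈ distSet q r) : μ ∈ distSet (fun x => q (f x)) (fun x => r (f x)) := by
  obtain ⟨hμ, l, hl, hqr⟩ := h
  exact ⟨hμ, l, hl, fun x => hqr (f x)⟩

lemma mul_mem_distSet (hμ : μ ∈ distSet q r) (hν : ν ∈ distSet r s) : μ * ν ∈ distSet q s := by
  obtain ⟨hμ1, l, hl, hqr⟩ := hμ
  obtain ⟨hν1, m, hm, hrs⟩ := hν
  refine ⟨one_le_mul_of_one_le_of_one_le hμ1 hν1, l * m, mul_pos hl hm, fun x => ⟨?_, ?_⟩⟩
  · calc q x ≤ l * r x := (hqr x).1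
      _ ≤ l * (m * s x) := mul_le_mul_of_nonneg_left (hrs x).1 hl.le
      _ = l * m * s x := by ring
  · calc l * m * s x = l * (m * s x) := by ring
      _ ≤ l * (ν * r x) := mul_le_mul_of_nonneg_left (hrs x).2 hl.le
      _ = ν * (l * r x) := by ring
      _ ≤ ν * (μ * q x) := mul_le_mul_of_nonneg_left (hqr x).2 (by linarith)
      _ = μ * ν * q x := by ring

lemma div_mem_distSet_of_bounds {a b : ℝ} (ha : 0 < a) (hab : a ≤ b)
    (h : ∀ x, a * r x ≤ q x ∧ q x ≤ b * r x) : b / a ∈ distSet q r := by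
  refine ⟨(one_le_div ha).mpr hab, b, ha.trans_le hab, fun x => ⟨(h x).2, ?_⟩⟩
  calc b * r x = b / a * (a * r x) := by field_simp
    _ ≤ b / a * q x := mul_le_mul_of_nonneg_left (h x).1 (div_pos (ha.trans_le hab) ha).le

lemma mul_le_mul_of_mem_distSet (hr : ∀ x, 0 ≤ r x) (h : μ ∈ distSet q r) (x y : E) :
    q x * r y ≤ μ * (q y * r x) := by
  obtain ⟨-, l, -, hqr⟩ := h
  calc q x * r y ≤ l * r x * r y := mul_le_mul_of_nonneg_right (hqr x).1 (hr y)
    _ = l * r y * r x := by ring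
    _ ≤ μ * q y * r x := mul_le_mul_of_nonneg_right (hqr y).2 (hr x)
    _ = μ * (q y * r x) := by ring

end distSet

namespace IsNormFn

section General

variable {E : Type*} [AddCommGroup E] [Module ℝ E] {q : E → ℝ}

lemma map_zero (hq : IsNormFn q) : q 0 = 0 := (hq.2.1 0).mpr rfl

lemma map_sub_comm (hq : IsNormFn q) (x y : E) : q (x - y) = q (y - x) := by
  rw [← neg_sub, ← neg_one_smul ℝ, hq.2.2.1, abs_neg, abs_one, one_mul]

lemma comp_linearMap (hq : IsNormFn q) {F : Type*} [AddCommGroup F] [Module ℝ F]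
    (f : F →ₗ[ℝ] E) (hf : Function.Injective f) : IsNormFn (fun x => q (f x)) :=
  ⟨fun x => hq.1 (f x),
    fun x => by rw [hq.2.1, map_eq_zero_iff f hf],
    fun c x => by simp only [map_smul, hq.2.2.1],
    fun x y => by simp only [map_add]; exact hq.2.2.2 _ _⟩

lemma bounds_of_map_sub_le (hq : IsNormFn q) {η : ℝ} {y z : E} (h : q (y - z) ≤ η * q z) :
    (1 - η) * q z ≤ q y ∧ q y ≤ (1 + η) * q z := by
  have hy : q y ≤ q z + q (y - z) := by simpa using hq.2.2.2 z (y - z)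
  have hz : q z ≤ q y + q (z - y) := by simpa using hq.2.2.2 y (z - y)
  rw [hq.map_sub_comm] at hz
  constructor <;> linarith

end General

section Pi

variable {ι : Type*} [Fintype ι] {q : (ι → ℝ) → ℝ}

lemma exists_le_mul_norm (hq : IsNormFn q) : ∃ b, 0 ≤ b ∧ ∀ x, q x ≤ b * ‖x‖ := by
  classical
  set e : ι → ι → ℝ := fun i j => if i = j then 1 else 0
  refine ⟨∑ i, q (e i), Finset.sum_nonneg fun i _ => hq.1 _, fun x => ?_⟩
  calc q x = q (∑ i, x i • e i) := congrArg q (pi_eq_sum_univ x)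
    _ ≤ ∑ i, q (x i • e i) := Finset.le_sum_of_subadditive q hq.map_zero.le hq.2.2.2 _ _
    _ = ∑ i, |x i| * q (e i) := by simp only [hq.2.2.1]
    _ ≤ ∑ i, ‖x‖ * q (e i) := by
      gcongr with i
      · exact hq.1 _
      · exact norm_le_pi_norm x i
    _ = (∑ i, q (e i)) * ‖x‖ := by rw [← Finset.mul_sum, mul_comm]

lemma continuous (hq : IsNormFn q) : Continuous q := by
  obtain ⟨b, hb, hqb⟩ := hq.exists_le_mul_norm
  refine (LipschitzWith.of_dist_le_mul (K := ⟨b, hb⟩) fun x y => ?_).continuous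
  have hx : q x ≤ q y + q (x - y) := by simpa using hq.2.2.2 y (x - y)
  have hy : q y ≤ q x + q (x - y) := by
    simpa [hq.map_sub_comm x y] using hq.2.2.2 x (y - x)
  show dist (q x) (q y) ≤ b * dist x y
  rw [Real.dist_eq, dist_eq_norm, abs_sub_le_iff]
  constructor <;> linarith [hqb (x - y)]

-- `q` is continuous and positive on the compact unit sphere.
lemma exists_mul_norm_le (hq : IsNormFn q) : ∃ a, 0 < a ∧ ∀ x, a * ‖x‖ ≤ q x := by
  obtain ⟨a, ha, hsphere⟩ := (isCompact_sphere (0 : ι → ℝ) 1).exists_forall_le'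
    hq.continuous.continuousOn (a := 0) fun x hx =>
      (hq.1 x).lt_of_ne' fun h => by simp [(hq.2.1 x).mp h] at hx
  refine ⟨a, ha, fun x => ?_⟩
  rcases eq_or_ne x 0 with rfl | hx
  · simp [hq.map_zero]
  have hxpos : 0 < ‖x‖ := norm_pos_iff.mpr hx
  have hu := hsphere (‖x‖⁻¹ • x) (by simp [norm_smul, hxpos.ne'])
  rw [hq.2.2.1, abs_of_pos (inv_pos.mpr hxpos), inv_mul_eq_div, le_div_iff₀ hxpos] at hu
  linarith

lemma exists_bounds (hq : IsNormFn q) :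
    ∃ a b, 0 < a ∧ a ≤ b ∧ ∀ x, a * ‖x‖ ≤ q x ∧ q x ≤ b * ‖x‖ := by
  obtain ⟨a, ha, hqa⟩ := hq.exists_mul_norm_le
  obtain ⟨b, -, hqb⟩ := hq.exists_le_mul_norm
  refine ⟨a, max a b, ha, le_max_left a b, fun x => ⟨hqa x, (hqb x).trans ?_⟩⟩
  exact mul_le_mul_of_nonneg_right (le_max_right a b) (norm_nonneg x)

lemma distSet_nonempty {r : (ι → ℝ) → ℝ} (hq : IsNormFn q) (hr : IsNormFn r) :
    (distSet q r).Nonempty := by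
  obtain ⟨a, b, ha, hab, hqab⟩ := hq.exists_bounds
  obtain ⟨c, d, hc, hcd, hrcd⟩ := hr.exists_bounds
  have hq_norm : b / a ∈ distSet q (‖·‖) := div_mem_distSet_of_bounds ha hab hqab
  have hnorm_r : c⁻¹ / d⁻¹ ∈ distSet (‖·‖) r := by
    refine div_mem_distSet_of_bounds (inv_pos.mpr (hc.trans_le hcd)) (inv_anti₀ hc hcd)
      fun x => ⟨?_, ?_⟩
    · rw [inv_mul_le_iff₀ (hc.trans_le hcd)]; exact (hrcd x).2
    · rw [le_inv_mul_iff₀ hc]; exact (hrcd x).1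
  exact ⟨_, mul_mem_distSet hq_norm hnorm_r⟩

end Pi

end IsNormFn

open Matrix

lemma Matrix.norm_mulVec_le_of_abs_le {m n : Type*} [Fintype m] [Fintype n]
    {M : Matrix m n ℝ} {c : ℝ} (hc : 0 ≤ c) (hM : ∀ i j, |M i j| ≤ c) (x : n → ℝ) :
    ‖M *ᵥ x‖ ≤ Fintype.card n * c * ‖x‖ := by
  refine (pi_norm_le_iff_of_nonneg (by positivity)).mpr fun i => ?_
  calc ‖(M *ᵥ x) i‖ = |∑ j, M i j * x j| := rfl
    _ ≤ ∑ j, |M i j| * |x j| := by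
      simpa only [abs_mul] using Finset.abs_sum_le_sum_abs (fun j => M i j * x j) Finset.univ
    _ ≤ ∑ _j : n, c * ‖x‖ := by
      gcongr with j
      exacts [hM i j, norm_le_pi_norm x j]
    _ = Fintype.card n * c * ‖x‖ := by
      rw [Finset.sum_const, Finset.card_univ, nsmul_eq_mul, mul_assoc]

namespace IsNormFn

variable {n : Type*} [Fintype n] [DecidableEq n] {q : (n → ℝ) → ℝ}

lemma comp_mulVec (hq : IsNormFn q) {T : Matrix n n ℝ} (hT : IsUnit T) :
    IsNormFn (fun x => q (T *ᵥ x)) :=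
  hq.comp_linearMap T.mulVecLin (Matrix.mulVec_injective_iff_isUnit.mpr hT)

lemma exists_map_mulVec_le (hq : IsNormFn q) {T : Matrix n n ℝ} (hT : IsUnit T) :
    ∃ D, 0 ≤ D ∧ ∀ (M : Matrix n n ℝ) (c : ℝ), 0 ≤ c → (∀ i j, |M i j| ≤ c) →
      ∀ x, q (M *ᵥ x) ≤ D * c * q (T *ᵥ x) := by
  obtain ⟨b, hb, hqb⟩ := hq.exists_le_mul_norm
  obtain ⟨a, ha, hqTa⟩ := (hq.comp_mulVec hT).exists_mul_norm_le
  refine ⟨b * Fintype.card n / a, by positivity, fun M c hc hM x => ?_⟩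
  calc q (M *ᵥ x) ≤ b * ‖M *ᵥ x‖ := hqb _
    _ ≤ b * (Fintype.card n * c * ‖x‖) :=
      mul_le_mul_of_nonneg_left (Matrix.norm_mulVec_le_of_abs_le hc hM x) hb
    _ = b * Fintype.card n / a * c * (a * ‖x‖) := by field_simp
    _ ≤ b * Fintype.card n / a * c * q (T *ᵥ x) := by
      gcongr
      exact hqTa x

end IsNormFn

theorem exists_multDist_pullback_lt {n : Type*} [Fintype n] [DecidableEq n]
    {q : (n → ℝ) → ℝ} (hq : IsNormFn q) {T : Matrix n n ℝ} (hT : IsUnit T)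
    {ε : ℝ} (hε : 0 < ε) : ∃ δ : ℝ, 0 < δ ∧
      ∀ r : (n → ℝ) → ℝ, IsNormFn r → ∀ S : Matrix n n ℝ,
        (∀ i j, |S i j - T i j| < δ) → multDist r q < 1 + δ →
        multDist (fun x => r (S *ᵥ x)) (fun x => q (T *ᵥ x)) < 1 + ε := by
  obtain ⟨D, hD, hqD⟩ := hq.exists_map_mulVec_le hT
  have hratio_lim : Filter.Tendsto (fun δ : ℝ => (1 + δ) * ((1 + D * δ) / (1 - D * δ)))
      (nhds 0) (nhds 1) := by
    have : ContinuousAt (fun δ : ℝ => (1 + δ) * ((1 + D * δ) / (1 - D * δ))) 0 := by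
      fun_prop (disch := norm_num)
    simpa using this.tendsto
  have hDδ_lim : Filter.Tendsto (fun δ : ℝ => D * δ) (nhds 0) (nhds 0) := by
    simpa using (continuous_const_mul D).tendsto 0
  obtain ⟨δ, ⟨hδε, hDδ⟩, hδ⟩ :=
    (((hratio_lim.eventually (gt_mem_nhds (lt_add_of_pos_right 1 hε))).and
      (hDδ_lim.eventually (gt_mem_nhds one_pos))).filter_mono nhdsWithin_le_nhds
      |>.and (self_mem_nhdsWithin (s := Set.Ioi 0))).exists
  refine ⟨δ, hδ, fun r hr S hST hrq => ?_⟩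
  obtain ⟨μ, hμ, hμδ⟩ := exists_mem_distSet_lt_of_multDist_lt (hr.distSet_nonempty hq) hrq
  have hST_bounds (x : n → ℝ) := hq.bounds_of_map_sub_le (y := S *ᵥ x) (z := T *ᵥ x) <| by
    simpa only [Matrix.sub_mulVec] using
      hqD (S - T) δ hδ.le (fun i j => (hST i j).le) x
  have hS_T : (1 + D * δ) / (1 - D * δ) ∈
      distSet (fun x => q (S *ᵥ x)) (fun x => q (T *ᵥ x)) :=
    div_mem_distSet_of_bounds (by linarith) (by linarith [mul_nonneg hD hδ.le]) hST_bounds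
  calc multDist (fun x => r (S *ᵥ x)) (fun x => q (T *ᵥ x))
      ≤ μ * ((1 + D * δ) / (1 - D * δ)) :=
        multDist_le_of_mem (mul_mem_distSet (mem_distSet_comp (S *ᵥ ·) hμ) hS_T)
    _ ≤ (1 + δ) * ((1 + D * δ) / (1 - D * δ)) := by gcongr
    _ < 1 + ε := hδε

noncomputable def euclNorm (p : ℝ × ℝ) : ℝ := √(p.1 ^ 2 + p.2 ^ 2)

noncomputable def halvedOnAxis (p : ℝ × ℝ) : ℝ :=
  if p.2 = 0 ∧ p.1 ≠ 0 then euclNorm p / 2 else euclNorm p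

noncomputable def rotate (θ : ℝ) (p : ℝ × ℝ) : ℝ × ℝ :=
  (Real.cos θ * p.1 - Real.sin θ * p.2, Real.sin θ * p.1 + Real.cos θ * p.2)

lemma euclNorm_eq_norm (p : ℝ × ℝ) : euclNorm p = ‖Complex.equivRealProdCLM.symm p‖ := by
  rw [Complex.equivRealProdCLM_symm_apply, Complex.norm_add_mul_I, euclNorm]

lemma euclNorm_nonneg (p : ℝ × ℝ) : 0 ≤ euclNorm p := Real.sqrt_nonneg _

lemma euclNorm_eq_zero {p : ℝ × ℝ} : euclNorm p = 0 ↔ p = 0 := by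
  rw [euclNorm_eq_norm, norm_eq_zero, map_eq_zero_iff _ Complex.equivRealProdCLM.symm.injective]

lemma euclNorm_add_le (p p' : ℝ × ℝ) : euclNorm (p + p') ≤ euclNorm p + euclNorm p' := by
  simpa only [euclNorm_eq_norm, map_add] using norm_add_le _ _

lemma euclNorm_smul (c : ℝ) (p : ℝ × ℝ) : euclNorm (c • p) = |c| * euclNorm p := by
  rw [euclNorm_eq_norm, euclNorm_eq_norm, map_smul, norm_smul, Real.norm_eq_abs]

lemma euclNorm_rotate (θ : ℝ) (p : ℝ × ℝ) : euclNorm (rotate θ p) = euclNorm p := by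
  rw [euclNorm, euclNorm, rotate]
  congr 1
  linear_combination (p.1 ^ 2 + p.2 ^ 2) * Real.sin_sq_add_cos_sq θ

lemma euclNorm_cos_sin (θ : ℝ) : euclNorm (Real.cos θ, Real.sin θ) = 1 := by
  rw [euclNorm, Real.cos_sq_add_sin_sq, Real.sqrt_one]

lemma rotate_rotate (a b : ℝ) (p : ℝ × ℝ) : rotate a (rotate b p) = rotate (a + b) p := by
  simp only [rotate, Real.cos_add, Real.sin_add, Prod.mk.injEq]
  constructor <;> ring

lemma rotate_one_zero (θ : ℝ) : rotate θ (1, 0) = (Real.cos θ, Real.sin θ) := by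
  simp [rotate]

lemma halvedOnAxis_bounds (p : ℝ × ℝ) :
    euclNorm p / 2 ≤ halvedOnAxis p ∧ halvedOnAxis p ≤ euclNorm p := by
  have := euclNorm_nonneg p
  unfold halvedOnAxis
  split_ifs <;> constructor <;> linarith

lemma halvedOnAxis_one_zero : halvedOnAxis (1, 0) = 1 / 2 := by
  simp [halvedOnAxis, euclNorm]

lemma halvedOnAxis_cos_sin {θ : ℝ} (h : Real.sin θ ≠ 0) :
    halvedOnAxis (Real.cos θ, Real.sin θ) = 1 := by
  rw [halvedOnAxis, if_neg fun hθ => h hθ.1, euclNorm_cos_sin]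

lemma halvedOnAxis_smul (c : ℝ) (p : ℝ × ℝ) : halvedOnAxis (c • p) = |c| * halvedOnAxis p := by
  rcases eq_or_ne c 0 with rfl | hc
  · simp [halvedOnAxis, euclNorm]
  have hcond : ((c • p).2 = 0 ∧ (c • p).1 ≠ 0) ↔ (p.2 = 0 ∧ p.1 ≠ 0) := by
    simp [hc]
  unfold halvedOnAxis
  rw [euclNorm_smul]
  split_ifs with hcp hp hp
  · ring
  · exact absurd (hcond.mp hcp) hp
  · exact absurd (hcond.mpr hp) hcp
  · rfl

-- The quasi-triangle constant `2` is the ratio of the bounds in `halvedOnAxis_bounds`.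
lemma isQuasinorm_halvedOnAxis : IsQuasinorm halvedOnAxis := by
  refine ⟨fun p => ?_, fun p => ?_, halvedOnAxis_smul, 2, two_pos, fun p p' => ?_⟩
  · linarith [halvedOnAxis_bounds p, euclNorm_nonneg p]
  · constructor
    · intro hp
      have := halvedOnAxis_bounds p
      exact euclNorm_eq_zero.mp (by linarith [euclNorm_nonneg p])
    · rintro rfl
      simp [halvedOnAxis, euclNorm]
  · linarith [euclNorm_add_le p p', halvedOnAxis_bounds p, halvedOnAxis_bounds p',
      halvedOnAxis_bounds (p + p')]

lemma multDist_halvedOnAxis_rotate {a b : ℝ} (h : Real.sin (b - a) ≠ 0) :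
    multDist (fun p => halvedOnAxis (rotate a p)) (fun p => halvedOnAxis (rotate b p)) = 4 := by
  set qa := fun p => halvedOnAxis (rotate a p)
  set qb := fun p => halvedOnAxis (rotate b p)
  have hqa (p : ℝ × ℝ) := halvedOnAxis_bounds (rotate a p)
  have hqb (p : ℝ × ℝ) := halvedOnAxis_bounds (rotate b p)
  simp only [euclNorm_rotate] at hqa hqb
  have h4 : (4 : ℝ) ∈ distSet qa qb := by
    have := div_mem_distSet_of_bounds (q := qa) (r := qb) (a := 1 / 2) (b := 2) (by norm_num)
      (by norm_num) fun p => ⟨by linarith [hqa p, hqb p], by linarith [hqa p, hqb p]⟩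
    norm_num at this
    exact this
  refine le_antisymm (multDist_le_of_mem h4) (le_csInf ⟨4, h4⟩ fun μ hμ => ?_)
  have key := mul_le_mul_of_mem_distSet
    (fun p => (div_nonneg (euclNorm_nonneg p) two_pos.le).trans (hqb p).1) hμ
    (rotate (-b) (1, 0)) (rotate (-a) (1, 0))
  have hab : Real.sin (a - b) ≠ 0 := by rwa [← neg_sub, Real.sin_neg, neg_ne_zero]
  simp only [qa, rotate_rotate] at key
  simp only [← sub_eq_add_neg, sub_self, rotate_one_zero] at key
  rw [halvedOnAxis_cos_sin h, halvedOnAxis_cos_sin hab, Real.cos_zero, Real.sin_zero,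
    halvedOnAxis_one_zero] at key
  linarith

lemma sin_pi_div_sub_pi_div_ne_zero {k l : ℕ} (hk : 1 ≤ k) (hl : 1 ≤ l) (hkl : k ≠ l) :
    Real.sin (π / l - π / k) ≠ 0 := by
  have hk' : (1 : ℝ) ≤ k := by exact_mod_cast hk
  have hl' : (1 : ℝ) ≤ l := by exact_mod_cast hl
  have hpk : 0 < π / k ∧ π / k ≤ π := ⟨by positivity, div_le_self Real.pi_pos.le hk'⟩
  have hpl : 0 < π / l ∧ π / l ≤ π := ⟨by positivity, div_le_self Real.pi_pos.le hl'⟩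
  rw [Ne, Real.sin_eq_zero_iff_of_lt_of_lt (by linarith) (by linarith), sub_eq_zero,
    div_eq_div_iff (by positivity) (by positivity), mul_right_inj' Real.pi_ne_zero]
  exact_mod_cast hkl

/-- (T, ‖·‖) ↦ T*‖·‖ is continuous on GL(n) × 𝒩, but not for quasinorms. -/
theorem stmt19 {n : ℕ} :
    (∀ q : (Fin n → ℝ) → ℝ, IsNormFn q → ∀ T : Matrix (Fin n) (Fin n) ℝ, IsUnit T →
      ∀ ε : ℝ, 0 < ε → ∃ δ : ℝ, 0 < δ ∧
        ∀ r : (Fin n → ℝ) → ℝ, IsNormFn r → ∀ S : Matrix (Fin n) (Fin n) ℝ, IsUnit S →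
          (∀ i j, |S i j - T i j| < δ) → multDist r q < 1 + δ →
          multDist (fun x => r (S.mulVec x)) (fun x => q (T.mulVec x)) < 1 + ε) ∧
    (∃ q : ℝ × ℝ → ℝ, IsQuasinorm q ∧
      (∀ p : ℝ × ℝ, q p =
        if p.2 = 0 ∧ p.1 ≠ 0 then Real.sqrt (p.1 ^ 2 + p.2 ^ 2) / 2
        else Real.sqrt (p.1 ^ 2 + p.2 ^ 2)) ∧
      ∀ k l : ℕ, 1 ≤ k → 1 ≤ l → k ≠ l →
        multDist
          (fun p : ℝ × ℝ => q (Real.cos (π / k) * p.1 - Real.sin (π / k) * p.2,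
            Real.sin (π / k) * p.1 + Real.cos (π / k) * p.2))
          (fun p : ℝ × ℝ => q (Real.cos (π / l) * p.1 - Real.sin (π / l) * p.2,
            Real.sin (π / l) * p.1 + Real.cos (π / l) * p.2)) = 4) := by
  refine ⟨fun q hq T hT ε hε => ?_, halvedOnAxis, isQuasinorm_halvedOnAxis, fun p => rfl,
    fun k l hk hl hkl => multDist_halvedOnAxis_rotate (sin_pi_div_sub_pi_div_ne_zero hk hl hkl)⟩
  obtain ⟨δ, hδ, hpullback⟩ := exists_multDist_pullback_lt hq hT hε
  exact ⟨δ, hδ, fun r hr S _ => hpullback r hr S⟩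
end
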